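/- arXiv:2308.10656 — 7 statements merged into one kernel-verified Lean document; each statement's English description precedes it below -/
import Mathlib

section
/- Let (N, I) be a k-system on a finite ground set N, where k is a positive integer. Let u_1, ..., u_s be distinct elements of N such that T = {u_1, ..., u_s} ∈ I. Let O ⊆ N \ T be a set with O ∈ I such that T ∪ {v} ∉ I for every v ∈ O. Then there exists a map Υ : O → T such that: (1) for every v ∈ O, if Υ(v) = u_t then {u_1, ..., u_{t−1}} ∪ {v} ∈ I; and (2) for every u ∈ T, the fiber Υ^{−1}(u) = {v ∈ O : Υ(v) = u} has at most k elements. -/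
/-!
For `v ∈ O` let `t v` be a position such that `v` can be added to `{u i | i < t v}` but not to
`{u i | i ≤ t v}`; it exists because `{v}` is independent while `insert v T` is not. The
elements `v` with `t v ≤ m` form an independent set none of whose elements can be added to
`{u i | i ≤ m}`, so the `k`-system property bounds their number by `k * (m + 1)`. This is
Hall's condition for matching `O` into `k` copies of the positions, `v` being allowed at every
position `≤ t v`; the matching gives `Υ`.
-/

open Finset

theorem Nat.exists_lt_and_not_succ {p : ℕ → Prop} {n : ℕ} (h0 : p 0) (hn : ¬ p n) :
    ∃ t < n, p t ∧ ¬ p (t + 1) := by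
  induction n with
  | zero => exact absurd h0 hn
  | succ n ih =>
    by_cases hpn : p n
    · exact ⟨n, n.lt_succ_self, hpn, hn⟩
    · obtain ⟨t, ht, hpt⟩ := ih hpn
      exact ⟨t, ht.trans n.lt_succ_self, hpt⟩

theorem exists_le_and_card_fiber_le {ι : Type*} [Fintype ι] [DecidableEq ι] {s k : ℕ}
    (f : ι → Fin s) (hf : ∀ m : Fin s, #{x | f x ≤ m} ≤ k * (m + 1)) :
    ∃ g : ι → Fin s, (∀ x, g x ≤ f x) ∧ ∀ t, #{x | g x = t} ≤ k := by
  -- Hall's theorem for the bipartite graph joining `x` to the `k` copies of each level `≤ f x`.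
  set slots : ι → Finset (Fin s × Fin k) := fun x => Iic (f x) ×ˢ univ
  have hall : ∀ A : Finset ι, #A ≤ #(A.biUnion slots) := by
    intro A
    rcases A.eq_empty_or_nonempty with rfl | hA
    · simp
    obtain ⟨x, hxA, hx⟩ := A.exists_max_image f hA
    calc #A ≤ #{y | f y ≤ f x} := card_le_card fun y hy => by simpa using hx y hy
      _ ≤ k * (f x + 1) := hf (f x)
      _ = #(slots x) := by simp [slots, mul_comm]
      _ ≤ #(A.biUnion slots) := card_le_card (subset_biUnion_of_mem slots hxA)
  obtain ⟨F, hF_inj, hF_mem⟩ := (all_card_le_biUnion_card_iff_exists_injective slots).mp hall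
  refine ⟨fun x => (F x).1, fun x => by simpa [slots] using (hF_mem x), fun t => ?_⟩
  calc #{x | (F x).1 = t} ≤ #(univ : Finset (Fin k)) := by
        refine card_le_card_of_injOn (fun x => (F x).2) (fun _ _ => mem_univ _) ?_
        intro x hx y hy hxy
        simp only [coe_filter, mem_univ, true_and, Set.mem_ofPred_eq] at hx hy
        exact hF_inj (Prod.ext (hx.trans hy.symm) hxy)
    _ = k := by simp

section IndependenceSystem

variable {α : Type*} [DecidableEq α]

def IsBaseOf (I : Finset α → Prop) (X Y : Finset α) : Prop :=
  X ⊆ Y ∧ I X ∧ ∀ u ∈ Y \ X, ¬ I (insert u X)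

theorem exists_isBaseOf_superset {I : Finset α → Prop} {X Y : Finset α} (hXY : X ⊆ Y)
    (hX : I X) : ∃ B, X ⊆ B ∧ IsBaseOf I B Y := by
  classical
  obtain ⟨B, hB, hBmax⟩ := exists_max_image {B ∈ Y.powerset | X ⊆ B ∧ I B} card
    ⟨X, by simp [hXY, hX]⟩
  simp only [mem_filter, mem_powerset] at hB hBmax
  refine ⟨B, hB.2.1, hB.1, hB.2.2, fun w hw hwB => ?_⟩
  rw [mem_sdiff] at hw
  have := hBmax (insert w B) ⟨insert_subset hw.1 hB.1, hB.2.1.trans (subset_insert w B), hwB⟩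
  rw [card_insert_of_notMem hw.2] at this
  omega

-- Compare a base of `P ∪ F` containing `F` with the base `P` of `P ∪ F`.
theorem card_le_mul_card_of_forall_not_insert {I : Finset α → Prop} {k : ℕ}
    (h_ksys : ∀ Y X₁ X₂, IsBaseOf I X₁ Y → IsBaseOf I X₂ Y → #X₁ ≤ k * #X₂)
    {P F : Finset α} (hP : I P) (hF : I F) (hFP : ∀ v ∈ F, ¬ I (insert v P)) :
    #F ≤ k * #P := by
  obtain ⟨B, hFB, hB⟩ := exists_isBaseOf_superset (subset_union_right (s₁ := P)) hF
  have hPbase : IsBaseOf I P (P ∪ F) := by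
    refine ⟨subset_union_left, hP, fun v hv => hFP v ?_⟩
    simp only [mem_sdiff, mem_union] at hv
    exact hv.1.resolve_left hv.2
  exact (card_le_card hFB).trans (h_ksys _ _ _ hB hPbase)

def initSeg {s : ℕ} (u : Fin s → α) (c : ℕ) : Finset α :=
  image u {i | (i : ℕ) < c}

theorem initSeg_mono {s : ℕ} (u : Fin s → α) {c d : ℕ} (h : c ≤ d) :
    initSeg u c ⊆ initSeg u d :=
  image_subset_image fun i hi => by simp only [mem_filter, mem_univ, true_and] at hi ⊢; omega

theorem initSeg_zero {s : ℕ} (u : Fin s → α) : initSeg u 0 = ∅ := by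
  simp [initSeg]

theorem initSeg_self {s : ℕ} (u : Fin s → α) : initSeg u s = image u univ := by
  simp [initSeg]

theorem card_initSeg {s : ℕ} {u : Fin s → α} (hu : Function.Injective u) {c : ℕ} (hc : c ≤ s) :
    #(initSeg u c) = c := by
  rw [initSeg, card_image_of_injective _ hu, Fin.card_filter_val_lt, min_eq_right hc]

theorem initSeg_subset {s : ℕ} (u : Fin s → α) (c : ℕ) : initSeg u c ⊆ image u univ :=
  image_subset_image (filter_subset _ _)

end IndependenceSystem

theorem stmt_0_general {α : Type*} [DecidableEq α]
    (I : Finset α → Prop) (k : ℕ)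
    (h_down : ∀ X Y : Finset α, X ⊆ Y → I Y → I X)
    (h_ksys : ∀ Y X₁ X₂ : Finset α, X₁ ⊆ Y → X₂ ⊆ Y → I X₁ → I X₂ →
      (∀ u ∈ Y \ X₁, ¬ I (insert u X₁)) →
      (∀ u ∈ Y \ X₂, ¬ I (insert u X₂)) →
      X₁.card ≤ k * X₂.card)
    (s : ℕ) (u : Fin s → α) (hu : Function.Injective u)
    (T : Finset α) (hT : T = Finset.image u Finset.univ) (hTI : I T)
    (O : Finset α) (hOI : I O)
    (hOadd : ∀ v ∈ O, ¬ I (insert v T)) :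
    ∃ Υ : {v : α // v ∈ O} → Fin s,
      (∀ v : {v : α // v ∈ O},
        I (insert v.1 ((Finset.univ.filter (fun i : Fin s => i < Υ v)).image u))) ∧
      (∀ t : Fin s, (O.attach.filter (fun v => Υ v = t)).card ≤ k) := by
  have h_ksys' : ∀ Y X₁ X₂, IsBaseOf I X₁ Y → IsBaseOf I X₂ Y → #X₁ ≤ k * #X₂ :=
    fun Y X₁ X₂ h₁ h₂ => h_ksys Y X₁ X₂ h₁.1 h₂.1 h₁.2.1 h₂.2.1 h₁.2.2 h₂.2.2
  have h_threshold : ∀ v : {v // v ∈ O}, ∃ t : Fin s,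
      I (insert v.1 (initSeg u t)) ∧ ¬ I (insert v.1 (initSeg u (t + 1))) := by
    intro ⟨v, hv⟩
    have h0 : I (insert v (initSeg u 0)) := by
      rw [initSeg_zero]; exact h_down _ _ (by simpa using hv) hOI
    have hs : ¬ I (insert v (initSeg u s)) := by rw [initSeg_self, ← hT]; exact hOadd v hv
    obtain ⟨t, hts, ht⟩ :=
      Nat.exists_lt_and_not_succ (p := fun c => I (insert v (initSeg u c))) h0 hs
    exact ⟨⟨t, hts⟩, ht⟩
  choose t ht_ind ht_dep using h_threshold
  have h_count : ∀ m : Fin s, #{v | t v ≤ m} ≤ k * (m + 1) := by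
    intro m
    rw [← card_initSeg hu (c := m + 1) m.2, ← card_map (Function.Embedding.subtype _)]
    refine card_le_mul_card_of_forall_not_insert h_ksys'
      (h_down _ _ (hT ▸ initSeg_subset u _) hTI) (h_down _ _ ?_ hOI) ?_
    · intro v hv
      simp only [mem_map, mem_filter] at hv
      obtain ⟨w, -, rfl⟩ := hv
      exact w.2
    · intro v hv hvI
      simp only [mem_map, mem_filter, mem_univ, true_and] at hv
      obtain ⟨w, hw, rfl⟩ := hv
      have hwm : (t w : ℕ) + 1 ≤ m + 1 := by simpa using hw
      exact ht_dep w (h_down _ _ (insert_subset_insert _ (initSeg_mono u hwm)) hvI)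
  obtain ⟨Υ, hΥt, hΥfiber⟩ := exists_le_and_card_fiber_le t h_count
  refine ⟨Υ, fun v => h_down _ _ (insert_subset_insert _ (initSeg_mono u (hΥt v))) (ht_ind v),
    fun τ => by simpa [Finset.univ_eq_attach] using hΥfiber τ⟩

/-- Mapping lemma for `k`-systems: if `T = {u_1,…,u_s} ∈ I` and
`O ⊆ N \ T` is independent with `T ∪ {v} ∉ I` for every `v ∈ O`, then there is a map
`Υ : O → T` such that each `v ∈ O` can be added to the prefix preceding `Υ v`, and
each fiber of `Υ` has at most `k` elements. -/
theorem stmt_0 {α : Type*} [DecidableEq α] [Fintype α]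
    (I : Finset α → Prop) (k : ℕ) (hk : 0 < k)
    (h_empty : I ∅)
    (h_down : ∀ X Y : Finset α, X ⊆ Y → I Y → I X)
    (h_ksys : ∀ Y X₁ X₂ : Finset α, X₁ ⊆ Y → X₂ ⊆ Y → I X₁ → I X₂ →
      (∀ u ∈ Y \ X₁, ¬ I (insert u X₁)) →
      (∀ u ∈ Y \ X₂, ¬ I (insert u X₂)) →
      X₁.card ≤ k * X₂.card)
    (s : ℕ) (u : Fin s → α) (hu : Function.Injective u)
    (T : Finset α) (hT : T = Finset.image u Finset.univ) (hTI : I T)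
    (O : Finset α) (hOT : Disjoint O T) (hOI : I O)
    (hOadd : ∀ v ∈ O, ¬ I (insert v T)) :
    ∃ Υ : {v : α // v ∈ O} → Fin s,
      (∀ v : {v : α // v ∈ O},
        I (insert v.1 ((Finset.univ.filter (fun i : Fin s => i < Υ v)).image u))) ∧
      (∀ t : Fin s, (O.attach.filter (fun v => Υ v = t)).card ≤ k) :=
  stmt_0_general I k h_down h_ksys s u hu T hT hTI O hOI hOadd
end

section
/- Let (N, I) be a k-system on a finite ground set N, where k ≥ 1 is a real number. If T ∈ I, S ∈ I, and T ∪ {v} ∉ I for every v ∈ S \ T, then |S| ≤ k·|T|. -/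
/-- In a `k`-system (`k ≥ 1` real), if `T ∈ I`, `S ∈ I`, and
`T ∪ {v} ∉ I` for every `v ∈ S \ T`, then `|S| ≤ k·|T|`. -/
theorem stmt_1 {α : Type*} [DecidableEq α] [Fintype α]
    (I : Finset α → Prop) (k : ℝ) (hk : 1 ≤ k)
    (h_empty : I ∅)
    (h_down : ∀ X Y : Finset α, X ⊆ Y → I Y → I X)
    (h_ksys : ∀ Y X₁ X₂ : Finset α, X₁ ⊆ Y → X₂ ⊆ Y → I X₁ → I X₂ →
      (∀ u ∈ Y \ X₁, ¬ I (insert u X₁)) →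
      (∀ u ∈ Y \ X₂, ¬ I (insert u X₂)) →
      (X₁.card : ℝ) ≤ k * X₂.card)
    (T S : Finset α) (hT : I T) (hS : I S)
    (h : ∀ v ∈ S \ T, ¬ I (insert v T)) :
    (S.card : ℝ) ≤ k * T.card := by
  classical
  set Y : Finset α := S ∪ T with hY
  -- the collection of independent supersets of S inside Y
  have hne : ((Y.powerset.filter (fun X => S ⊆ X ∧ I X))).Nonempty := by
    refine ⟨S, ?_⟩
    simp only [Finset.mem_filter, Finset.mem_powerset]
    exact ⟨Finset.subset_union_left, Finset.Subset.refl _, hS⟩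
  obtain ⟨S', hS'mem, hmax⟩ := Finset.exists_max_image _ Finset.card hne
  simp only [Finset.mem_filter, Finset.mem_powerset] at hS'mem
  obtain ⟨hS'Y, hSS', hIS'⟩ := hS'mem
  -- S' is a base of Y
  have hbase : ∀ u ∈ Y \ S', ¬ I (insert u S') := by
    intro u hu hIu
    rw [Finset.mem_sdiff] at hu
    have hmem : insert u S' ∈ Y.powerset.filter (fun X => S ⊆ X ∧ I X) := by
      simp only [Finset.mem_filter, Finset.mem_powerset]
      exact ⟨Finset.insert_subset hu.1 hS'Y, hSS'.trans (Finset.subset_insert _ _), hIu⟩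
    have := hmax _ hmem
    rw [Finset.card_insert_of_notMem hu.2] at this
    omega
  -- T is a base of Y
  have hTbase : ∀ u ∈ Y \ T, ¬ I (insert u T) := by
    intro u hu
    rw [Finset.mem_sdiff] at hu
    have : u ∈ S \ T := by
      rw [Finset.mem_sdiff]
      rcases Finset.mem_union.1 hu.1 with h' | h'
      · exact ⟨h', hu.2⟩
      · exact absurd h' hu.2
    exact h u this
  have key := h_ksys Y S' T hS'Y Finset.subset_union_right hIS' hT hbase hTbase
  calc (S.card : ℝ) ≤ S'.card := by exact_mod_cast Finset.card_le_card hSS'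
    _ ≤ k * T.card := key
end

section
/- Let H be a finite set, let g : H → ℝ and c : H → ℝ with c(v) > 0 for all v ∈ H, let ρ ≥ 0 and ε ∈ [0, 1]. Suppose E⁺ and E⁻ are disjoint subsets of H satisfying: (i) g(v) ≥ ρ·c(v) for every v ∈ E⁺; (ii) g(v) ≥ 0 for every v ∈ H \ E⁻; (iii) ε·Σ_{v∈E⁺} g(v) ≥ Σ_{v∈E⁻} (−g(v)); and (iv) Σ_{v∈E⁺} c(v) ≥ (1−ε)·Σ_{v∈H} c(v). Then Σ_{v∈H} g(v) ≥ (1−ε)²·ρ·Σ_{v∈H} c(v). -/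
/-- Deterministic core of the expected-marginal-density bound in
RandBatch: under conditions (i)–(iv) on disjoint `E⁺, E⁻ ⊆ H`,
`Σ_{v∈H} g v ≥ (1−ε)²·ρ·Σ_{v∈H} c v`. -/
theorem stmt_2 {α : Type*} [DecidableEq α]
    (H : Finset α) (g c : α → ℝ) (hc : ∀ v ∈ H, 0 < c v)
    (ρ : ℝ) (hρ : 0 ≤ ρ) (ε : ℝ) (hε0 : 0 ≤ ε) (hε1 : ε ≤ 1)
    (Ep Em : Finset α) (hEp : Ep ⊆ H) (hEm : Em ⊆ H) (hdisj : Disjoint Ep Em)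
    (h1 : ∀ v ∈ Ep, ρ * c v ≤ g v)
    (h2 : ∀ v ∈ H \ Em, 0 ≤ g v)
    (h3 : ∑ v ∈ Em, (-(g v)) ≤ ε * ∑ v ∈ Ep, g v)
    (h4 : (1 - ε) * ∑ v ∈ H, c v ≤ ∑ v ∈ Ep, c v) :
    (1 - ε) ^ 2 * ρ * ∑ v ∈ H, c v ≤ ∑ v ∈ H, g v := by
  have hcEp : (0:ℝ) ≤ ∑ v ∈ Ep, c v :=
    Finset.sum_nonneg fun v hv => (hc v (hEp hv)).le
  have hgEp : ρ * ∑ v ∈ Ep, c v ≤ ∑ v ∈ Ep, g v := by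
    rw [Finset.mul_sum]; exact Finset.sum_le_sum h1
  have hgEp0 : (0:ℝ) ≤ ∑ v ∈ Ep, g v :=
    le_trans (mul_nonneg hρ hcEp) hgEp
  have hsplit : ∑ v ∈ Ep ∪ Em, g v = ∑ v ∈ Ep, g v + ∑ v ∈ Em, g v :=
    Finset.sum_union hdisj
  have hsub : ∑ v ∈ Ep ∪ Em, g v ≤ ∑ v ∈ H, g v := by
    apply Finset.sum_le_sum_of_subset_of_nonneg (Finset.union_subset hEp hEm)
    intro v hv hnv
    exact h2 v (Finset.mem_sdiff.mpr ⟨hv, fun h => hnv (Finset.mem_union_right _ h)⟩)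
  have hEmg : -(ε * ∑ v ∈ Ep, g v) ≤ ∑ v ∈ Em, g v := by
    have := h3
    rw [Finset.sum_neg_distrib] at this
    linarith
  have key : (1 - ε) * ∑ v ∈ Ep, g v ≤ ∑ v ∈ H, g v := by nlinarith
  have h5 : (1 - ε) * (ρ * ∑ v ∈ Ep, c v) ≤ (1 - ε) * ∑ v ∈ Ep, g v :=
    mul_le_mul_of_nonneg_left hgEp (by linarith)
  have h6 : (1 - ε) * (ρ * ((1 - ε) * ∑ v ∈ H, c v)) ≤ (1 - ε) * (ρ * ∑ v ∈ Ep, c v) := by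
    apply mul_le_mul_of_nonneg_left _ (by linarith)
    exact mul_le_mul_of_nonneg_left h4 hρ
  nlinarith
end

section
/- Let N be a finite ground set and f : 2^N → ℝ a nonnegative submodular function. Let a_1, ..., a_s be distinct elements of N, and for each j ∈ {1, ..., s} let m_j = f({a_1, ..., a_j}) − f({a_1, ..., a_{j−1}}) denote the marginal gain of a_j over the preceding prefix. Let A⁺ = {a_j : m_j ≥ 0}. Then Σ_{j : a_j ∈ A⁺} m_j ≤ f(A⁺). -/
/-- For a nonnegative submodular `f` and distinct elements
`a_1,…,a_s` with prefix marginal gains `m_j`, the sum of the nonnegative marginal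
gains is at most `f(A⁺)`, where `A⁺ = {a_j : m_j ≥ 0}`. -/
theorem stmt_3 {α : Type*} [DecidableEq α] [Fintype α]
    (f : Finset α → ℝ)
    (hf_nonneg : ∀ X : Finset α, 0 ≤ f X)
    (hf_submod : ∀ X Y : Finset α, f (X ∪ Y) + f (X ∩ Y) ≤ f X + f Y)
    (s : ℕ) (a : Fin s → α) (ha : Function.Injective a)
    (m : Fin s → ℝ)
    (hm : ∀ j : Fin s, m j =
      f ((Finset.univ.filter (fun i : Fin s => i ≤ j)).image a) -
      f ((Finset.univ.filter (fun i : Fin s => i < j)).image a)) :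
    ∑ j ∈ Finset.univ.filter (fun j : Fin s => 0 ≤ m j), m j ≤
      f ((Finset.univ.filter (fun j : Fin s => 0 ≤ m j)).image a) := by
  set S := Finset.univ.filter (fun j : Fin s => 0 ≤ m j) with hSdef
  suffices h : ∀ n : ℕ, ∑ j ∈ S.filter (fun j : Fin s => (j : ℕ) < n), m j ≤
      f ((S.filter (fun j : Fin s => (j : ℕ) < n)).image a) by
    have hs := h s
    rwa [Finset.filter_true_of_mem (fun j _ => j.isLt)] at hs
  intro n
  induction n with
  | zero => simpa using hf_nonneg ∅
  | succ n ih =>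
    by_cases hn : n < s
    · set j : Fin s := ⟨n, hn⟩ with hjdef
      by_cases hj : j ∈ S
      · have hsplit : S.filter (fun i : Fin s => (i : ℕ) < n + 1) =
            insert j (S.filter (fun i : Fin s => (i : ℕ) < n)) := by
          ext i
          simp only [Finset.mem_insert, Finset.mem_filter]
          constructor
          · rintro ⟨hi, hlt⟩
            rcases Nat.lt_succ_iff_lt_or_eq.mp hlt with h' | h'
            · exact Or.inr ⟨hi, h'⟩
            · exact Or.inl (Fin.ext h')
          · rintro (rfl | ⟨hi, hlt⟩)
            · exact ⟨hj, Nat.lt_succ_self _⟩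
            · exact ⟨hi, Nat.lt_succ_of_lt hlt⟩
        have hjnot : j ∉ S.filter (fun i : Fin s => (i : ℕ) < n) := by
          simp [hjdef]
        set A := (S.filter (fun i : Fin s => (i : ℕ) < n)).image a with hAdef
        set P := (Finset.univ.filter (fun i : Fin s => i < j)).image a with hPdef
        have hAP : A ⊆ P := by
          apply Finset.image_subset_image
          intro i hi
          simp only [Finset.mem_filter] at hi ⊢
          exact ⟨Finset.mem_univ _, hi.2⟩
        have hajP : a j ∉ P := by
          intro hmem
          rw [hPdef, Finset.mem_image] at hmem
          obtain ⟨i, hi, hai⟩ := hmem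
          simp only [Finset.mem_filter] at hi
          exact absurd (ha hai) (ne_of_lt hi.2)
        have hQ : (Finset.univ.filter (fun i : Fin s => i ≤ j)).image a
            = insert (a j) P := by
          rw [hPdef, ← Finset.image_insert]
          congr 1
          ext i
          simp only [Finset.mem_insert, Finset.mem_filter, Finset.mem_univ,
            true_and]
          exact le_iff_eq_or_lt
        -- submodularity key step
        have key : f A + m j ≤ f (insert (a j) A) := by
          have hsub := hf_submod (insert (a j) A) P
          have h1 : insert (a j) A ∪ P = insert (a j) P := by
            rw [Finset.insert_union, Finset.union_eq_right.mpr hAP]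
          have h2 : insert (a j) A ∩ P = A := by
            rw [Finset.insert_inter_of_notMem hajP,
              Finset.inter_eq_left.mpr hAP]
          rw [h1, h2] at hsub
          rw [hm j, hQ]
          linarith
        rw [hsplit, Finset.sum_insert hjnot, Finset.image_insert]
        have hsum := ih
        calc m j + (∑ i ∈ S.filter (fun i : Fin s => (i : ℕ) < n), m i)
            ≤ f A + m j := by linarith
          _ ≤ f (insert (a j) A) := key
      · have hsplit : S.filter (fun i : Fin s => (i : ℕ) < n + 1) =
            S.filter (fun i : Fin s => (i : ℕ) < n) := by
          ext i
          simp only [Finset.mem_filter]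
          constructor
          · rintro ⟨hi, hlt⟩
            rcases Nat.lt_succ_iff_lt_or_eq.mp hlt with h' | h'
            · exact ⟨hi, h'⟩
            · have : i = j := Fin.ext h'
              exact absurd (this ▸ hi) hj
          · rintro ⟨hi, hlt⟩
            exact ⟨hi, Nat.lt_succ_of_lt hlt⟩
        rw [hsplit]; exact ih
    · have hsplit : S.filter (fun i : Fin s => (i : ℕ) < n + 1) =
          S.filter (fun i : Fin s => (i : ℕ) < n) := by
        ext i
        simp only [Finset.mem_filter]
        have : (i : ℕ) < s := i.isLt
        constructor <;> rintro ⟨hi, _⟩ <;> exact ⟨hi, by omega⟩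
      rw [hsplit]; exact ih
end

section
/- Let N be a finite ground set and f : 2^N → ℝ a nonnegative submodular function. Let a_1, ..., a_s be distinct elements of N, let A = {a_1, ..., a_s}, and for each j let m_j = f({a_1, ..., a_j}) − f({a_1, ..., a_{j−1}}). Let A⁺ = {a_j : m_j ≥ 0} and A⁻ = {a_j : m_j < 0}. Let E_1, ..., E_M be pairwise disjoint subsets of N \ A, and let P_1, ..., P_M be subsets of A. Then Σ_{j : a_j ∈ A⁻} (−m_j) + Σ_{i=1}^{M} Σ_{u∈E_i} (−f(u | P_i)) ≤ f(A⁺). -/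
section Aux
variable {α : Type*} [DecidableEq α]

/-- Submodularity: marginals shrink as the context grows. -/
private lemma marg_mono {f : Finset α → ℝ}
    (hf : ∀ X Y : Finset α, f (X ∪ Y) + f (X ∩ Y) ≤ f X + f Y)
    {X Y : Finset α} (u : α) (hXY : X ⊆ Y) (hu : u ∉ Y) :
    f (insert u Y) - f Y ≤ f (insert u X) - f X := by
  have h := hf (insert u X) Y
  have h1 : insert u X ∪ Y = insert u Y := by
    rw [Finset.insert_union, Finset.union_eq_right.mpr hXY]
  have h2 : insert u X ∩ Y = X := by
    ext x
    simp only [Finset.mem_inter, Finset.mem_insert]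
    constructor
    · rintro ⟨rfl | hx, hy⟩
      · exact absurd hy hu
      · exact hx
    · intro hx; exact ⟨Or.inr hx, hXY hx⟩
  rw [h1, h2] at h
  linarith

/-- Telescoping within one block. -/
private lemma block_bound {f : Finset α → ℝ}
    (hf : ∀ X Y : Finset α, f (X ∪ Y) + f (X ∩ Y) ≤ f X + f Y)
    (Ei : Finset α) :
    ∀ (P C : Finset α), Disjoint Ei C → P ⊆ C →
      f (C ∪ Ei) - f C ≤ ∑ u ∈ Ei, (f (insert u P) - f P) := by
  induction Ei using Finset.induction_on with
  | empty => intro P C _ _; simp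
  | @insert u E' hu ih =>
    intro P C hdisj hPC
    have hd' : Disjoint E' C := (Finset.disjoint_insert_left.mp hdisj).2
    have huC : u ∉ C := (Finset.disjoint_insert_left.mp hdisj).1
    have h1 : f (insert u C) - f C ≤ f (insert u P) - f P :=
      marg_mono hf u hPC huC
    have h2 : f ((insert u C) ∪ E') - f (insert u C)
        ≤ ∑ u' ∈ E', (f (insert u' P) - f P) := by
      refine ih P (insert u C) ?_ (hPC.trans (Finset.subset_insert u C))
      exact Finset.disjoint_insert_right.mpr ⟨hu, hd'⟩
    have h3 : C ∪ insert u E' = insert u C ∪ E' := by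
      rw [Finset.union_insert, Finset.insert_union]
    rw [Finset.sum_insert hu, h3]
    linarith

/-- Telescoping across blocks. -/
private lemma blocks_bound {f : Finset α → ℝ}
    (hf_nonneg : ∀ X : Finset α, 0 ≤ f X)
    (hf : ∀ X Y : Finset α, f (X ∪ Y) + f (X ∩ Y) ≤ f X + f Y) :
    ∀ (M : ℕ) (E P : Fin M → Finset α) (C : Finset α),
      (∀ i j : Fin M, i ≠ j → Disjoint (E i) (E j)) →
      (∀ i, Disjoint (E i) C) → (∀ i, P i ⊆ C) →
      - f C ≤ ∑ i, ∑ u ∈ E i, (f (insert u (P i)) - f (P i)) := by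
  intro M
  induction M with
  | zero =>
    intro E P C _ _ _
    simpa using neg_nonpos.mpr (hf_nonneg C)
  | succ n ih =>
    intro E P C hpw hC hP
    rw [Fin.sum_univ_succ]
    have h1 := block_bound hf (E 0) (P 0) C (hC 0) (hP 0)
    have h2 := ih (fun i => E i.succ) (fun i => P i.succ) (C ∪ E 0)
      (fun i j hij => hpw i.succ j.succ (fun h => hij (Fin.succ_injective _ h)))
      (fun i => Finset.disjoint_union_right.mpr
        ⟨hC i.succ, hpw i.succ 0 (Fin.succ_ne_zero i)⟩)
      (fun i => (hP i.succ).trans Finset.subset_union_left)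
    have h0 := hf_nonneg (C ∪ E 0)
    linarith

end Aux

/-- For a nonnegative submodular `f`, distinct elements `a_1,…,a_s`
forming `A` with prefix marginal gains `m_j`, pairwise disjoint sets `E_1,…,E_M ⊆ N\A`
and sets `P_1,…,P_M ⊆ A`, one has
`Σ_{j : m_j<0} (−m_j) + Σ_i Σ_{u∈E_i} (−f(u|P_i)) ≤ f(A⁺)`. -/
theorem stmt_4 {α : Type*} [DecidableEq α] [Fintype α]
    (f : Finset α → ℝ)
    (hf_nonneg : ∀ X : Finset α, 0 ≤ f X)
    (hf_submod : ∀ X Y : Finset α, f (X ∪ Y) + f (X ∩ Y) ≤ f X + f Y)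
    (s : ℕ) (a : Fin s → α) (ha : Function.Injective a)
    (A : Finset α) (hA : A = Finset.image a Finset.univ)
    (m : Fin s → ℝ)
    (hm : ∀ j : Fin s, m j =
      f ((Finset.univ.filter (fun i : Fin s => i ≤ j)).image a) -
      f ((Finset.univ.filter (fun i : Fin s => i < j)).image a))
    (M : ℕ) (E : Fin M → Finset α)
    (hE_pw : ∀ i j : Fin M, i ≠ j → Disjoint (E i) (E j))
    (hE_A : ∀ i : Fin M, Disjoint (E i) A)
    (P : Fin M → Finset α) (hP : ∀ i : Fin M, P i ⊆ A) :
    (∑ j ∈ Finset.univ.filter (fun j : Fin s => m j < 0), (-(m j))) +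
      (∑ i : Fin M, ∑ u ∈ E i, (-(f (insert u (P i)) - f (P i)))) ≤
      f ((Finset.univ.filter (fun j : Fin s => 0 ≤ m j)).image a) := by
  classical
  -- m at position k, in terms of prefixes by value
  have hmval : ∀ (k : ℕ) (hk : k < s),
      m ⟨k, hk⟩ = f (insert (a ⟨k, hk⟩)
          ((Finset.univ.filter (fun i : Fin s => i.val < k)).image a))
        - f ((Finset.univ.filter (fun i : Fin s => i.val < k)).image a) := by
    intro k hk
    have h1 : (Finset.univ.filter (fun i : Fin s => i ≤ (⟨k, hk⟩ : Fin s)))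
        = insert (⟨k, hk⟩ : Fin s) (Finset.univ.filter (fun i : Fin s => i.val < k)) := by
      ext i
      simp only [Finset.mem_filter, Finset.mem_univ, true_and, Finset.mem_insert,
        Fin.le_def, Fin.ext_iff, Fin.val_mk]
      omega
    have h2 : (Finset.univ.filter (fun i : Fin s => i < (⟨k, hk⟩ : Fin s)))
        = Finset.univ.filter (fun i : Fin s => i.val < k) := by
      ext i
      simp [Fin.lt_def]
    rw [hm ⟨k, hk⟩, h1, h2, Finset.image_insert]
  have hnotmem : ∀ (k : ℕ) (hk : k < s),
      a ⟨k, hk⟩ ∉ (Finset.univ.filter (fun i : Fin s => i.val < k)).image a := by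
    intro k hk hmem
    obtain ⟨i, hi, hai⟩ := Finset.mem_image.mp hmem
    have hi' : i.val < k := (Finset.mem_filter.mp hi).2
    have : i = ⟨k, hk⟩ := ha hai
    rw [this] at hi'
    simp at hi'
  -- full telescoping
  have tel : ∀ k : ℕ, k ≤ s →
      f ((Finset.univ.filter (fun i : Fin s => i.val < k)).image a)
        = f ∅ + ∑ i ∈ Finset.univ.filter (fun i : Fin s => i.val < k), m i := by
    intro k
    induction k with
    | zero => intro _; simp
    | succ k ih =>
      intro hk1
      have hk : k < s := hk1
      have hins : (Finset.univ.filter (fun i : Fin s => i.val < k + 1))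
          = insert (⟨k, hk⟩ : Fin s) (Finset.univ.filter (fun i : Fin s => i.val < k)) := by
        ext i
        simp only [Finset.mem_filter, Finset.mem_univ, true_and, Finset.mem_insert,
          Fin.ext_iff]
        omega
      have hnot : (⟨k, hk⟩ : Fin s) ∉ Finset.univ.filter (fun i : Fin s => i.val < k) := by
        simp
      rw [hins, Finset.image_insert, Finset.sum_insert hnot]
      have h1 := hmval k hk
      have h2 := ih (le_of_lt hk)
      linarith
  -- selected telescoping
  have telsel : ∀ k : ℕ, k ≤ s →
      f ∅ + ∑ i ∈ Finset.univ.filter (fun i : Fin s => i.val < k ∧ 0 ≤ m i), m i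
        ≤ f ((Finset.univ.filter (fun i : Fin s => i.val < k ∧ 0 ≤ m i)).image a) := by
    intro k
    induction k with
    | zero => simp
    | succ k ih =>
      intro hk1
      have hk : k < s := hk1
      have ih' := ih (le_of_lt hk)
      by_cases hsel : 0 ≤ m ⟨k, hk⟩
      · have hins : (Finset.univ.filter (fun i : Fin s => i.val < k + 1 ∧ 0 ≤ m i))
            = insert (⟨k, hk⟩ : Fin s)
              (Finset.univ.filter (fun i : Fin s => i.val < k ∧ 0 ≤ m i)) := by
          ext i
          simp only [Finset.mem_filter, Finset.mem_univ, true_and, Finset.mem_insert,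
            Fin.ext_iff]
          constructor
          · rintro ⟨h1, h2⟩
            rcases Nat.lt_succ_iff_lt_or_eq.mp h1 with h | h
            · exact Or.inr ⟨h, h2⟩
            · exact Or.inl h
          · rintro (h | ⟨h1, h2⟩)
            · refine ⟨by omega, ?_⟩
              have : i = ⟨k, hk⟩ := Fin.ext h
              rw [this]; exact hsel
            · exact ⟨by omega, h2⟩
        have hnot : (⟨k, hk⟩ : Fin s)
            ∉ Finset.univ.filter (fun i : Fin s => i.val < k ∧ 0 ≤ m i) := by
          simp
        have hsub : (Finset.univ.filter (fun i : Fin s => i.val < k ∧ 0 ≤ m i)).image a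
            ⊆ (Finset.univ.filter (fun i : Fin s => i.val < k)).image a := by
          apply Finset.image_subset_image
          intro i hi
          simp only [Finset.mem_filter, Finset.mem_univ, true_and] at hi ⊢
          exact hi.1
        have hnotmem' : a ⟨k, hk⟩
            ∉ (Finset.univ.filter (fun i : Fin s => i.val < k ∧ 0 ≤ m i)).image a :=
          fun h => hnotmem k hk (hsub h)
        have hmarg := marg_mono hf_submod (a ⟨k, hk⟩) hsub (hnotmem k hk)
        rw [hins, Finset.image_insert, Finset.sum_insert hnot]
        have := hmval k hk
        linarith
      · have heq : (Finset.univ.filter (fun i : Fin s => i.val < k + 1 ∧ 0 ≤ m i))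
            = Finset.univ.filter (fun i : Fin s => i.val < k ∧ 0 ≤ m i) := by
          ext i
          simp only [Finset.mem_filter, Finset.mem_univ, true_and]
          constructor
          · rintro ⟨h1, h2⟩
            rcases Nat.lt_succ_iff_lt_or_eq.mp h1 with h | h
            · exact ⟨h, h2⟩
            · exact absurd h2 (by rw [show i = (⟨k, hk⟩ : Fin s) from Fin.ext h]; exact hsel)
          · rintro ⟨h1, h2⟩; exact ⟨by omega, h2⟩
        rw [heq]
        exact ih'
  -- specialize to k = s
  have hall : Finset.univ.filter (fun i : Fin s => i.val < s) = Finset.univ := by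
    ext i; simp [i.isLt]
  have hselall : Finset.univ.filter (fun i : Fin s => i.val < s ∧ 0 ≤ m i)
      = Finset.univ.filter (fun i : Fin s => 0 ≤ m i) := by
    ext i; simp [i.isLt]
  have tel_s := tel s le_rfl
  rw [hall] at tel_s
  have telsel_s := telsel s le_rfl
  rw [hselall] at telsel_s
  -- blocks
  have hblocks := blocks_bound hf_nonneg hf_submod M E P A hE_pw hE_A hP
  -- sums
  have hsplit := Finset.sum_filter_add_sum_filter_not Finset.univ
    (fun j : Fin s => 0 ≤ m j) m
  have hneg : Finset.univ.filter (fun j : Fin s => m j < 0)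
      = Finset.univ.filter (fun j : Fin s => ¬ 0 ≤ m j) := by
    simp [not_le]
  have hsum1 : (∑ j ∈ Finset.univ.filter (fun j : Fin s => m j < 0), (-(m j)))
      = - ∑ j ∈ Finset.univ.filter (fun j : Fin s => ¬ 0 ≤ m j), m j := by
    rw [hneg, Finset.sum_neg_distrib]
  have hsum2 : (∑ i : Fin M, ∑ u ∈ E i, (-(f (insert u (P i)) - f (P i))))
      = - ∑ i : Fin M, ∑ u ∈ E i, (f (insert u (P i)) - f (P i)) := by
    simp [Finset.sum_neg_distrib]
  rw [hsum1, hsum2]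
  rw [hA] at hblocks
  have h0 := hf_nonneg ∅
  linarith
end

section
/- Let N be a finite ground set and f : 2^N → ℝ a nonnegative submodular function. Let N_1 and N_2 be disjoint subsets of N, let A_1 and A_2 be disjoint subsets of N_1, and let O ⊆ N_1 ∪ N_2. Then f(O) ≤ f(A_2 ∪ ((O ∩ N_1) \ A_1)) + f(A_1 ∪ (O ∩ N_1)) + f((O ∩ A_1) ∪ (O ∩ N_2)). -/
/-- Key structural inequality in the analysis of Probe: for a
nonnegative submodular `f`, disjoint `N₁, N₂`, disjoint `A₁, A₂ ⊆ N₁`, and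
`O ⊆ N₁ ∪ N₂`,
`f(O) ≤ f(A₂ ∪ ((O∩N₁)\A₁)) + f(A₁ ∪ (O∩N₁)) + f((O∩A₁) ∪ (O∩N₂))`. -/
theorem stmt_6 {α : Type*} [DecidableEq α] [Fintype α]
    (f : Finset α → ℝ)
    (hf_nonneg : ∀ X : Finset α, 0 ≤ f X)
    (hf_submod : ∀ X Y : Finset α, f (X ∪ Y) + f (X ∩ Y) ≤ f X + f Y)
    (N₁ N₂ : Finset α) (hN : Disjoint N₁ N₂)
    (A₁ A₂ : Finset α) (hA₁ : A₁ ⊆ N₁) (hA₂ : A₂ ⊆ N₁) (hA : Disjoint A₁ A₂)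
    (O : Finset α) (hO : O ⊆ N₁ ∪ N₂) :
    f O ≤ f (A₂ ∪ ((O ∩ N₁) \ A₁)) + f (A₁ ∪ (O ∩ N₁)) +
      f ((O ∩ A₁) ∪ (O ∩ N₂)) := by
  have hU : ((O ∩ N₁) \ A₁) ∪ ((O ∩ A₁) ∪ (O ∩ N₂)) = O := by
    ext a
    simp only [Finset.mem_union, Finset.mem_sdiff, Finset.mem_inter]
    constructor
    · tauto
    · intro ha
      rcases Finset.mem_union.mp (hO ha) with h | h
      · by_cases hA1 : a ∈ A₁ <;> tauto
      · tauto
  have hI : ((O ∩ N₁) \ A₁) ∩ ((O ∩ A₁) ∪ (O ∩ N₂)) = ∅ := by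
    ext a
    simp only [Finset.mem_inter, Finset.mem_sdiff, Finset.mem_union,
      Finset.notMem_empty, iff_false]
    rintro ⟨⟨⟨_, h1⟩, h2⟩, h | h⟩
    · exact h2 h.2
    · exact (hN.forall_ne_finset h1 h.2) rfl
  have hI2 : (A₂ ∪ ((O ∩ N₁) \ A₁)) ∩ (A₁ ∪ (O ∩ N₁)) = (O ∩ N₁) \ A₁ := by
    ext a
    simp only [Finset.mem_inter, Finset.mem_union, Finset.mem_sdiff]
    constructor
    · rintro ⟨h | h, h1 | h1⟩
      · exact absurd rfl (hA.forall_ne_finset h1 h)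
      · by_cases hA1 : a ∈ A₁
        · exact absurd rfl (hA.forall_ne_finset hA1 h)
        · exact ⟨h1, hA1⟩
      · exact h
      · exact h
    · tauto
  have h1 := hf_submod ((O ∩ N₁) \ A₁) ((O ∩ A₁) ∪ (O ∩ N₂))
  rw [hU, hI] at h1
  have h2 := hf_submod (A₂ ∪ ((O ∩ N₁) \ A₁)) (A₁ ∪ (O ∩ N₁))
  rw [hI2] at h2
  have := hf_nonneg ((A₂ ∪ ((O ∩ N₁) \ A₁)) ∪ (A₁ ∪ (O ∩ N₁)))
  have := hf_nonneg (∅ : Finset α)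
  linarith
end

section
/- For every real number k ≥ 1 and every ε ∈ [0, 2/5), setting p = 1/(1 + √(k+1)), the following inequality holds: (1 − p − ε)/(1 + ε + (k + (1−p)/p)·(1−ε)^{−3}) ≥ (1−ε)^5/(√(k+1) + 1)². -/
/-!
Write `s = √(k+1)`, so that `p = 1/(1+s)`, `(1-p)/p = s` and `k = s² - 1`. After clearing
denominators the claim becomes a polynomial inequality in `s` and `ε` whose slack factors as
`ε · (s² + 1 - (s² + s + 4) ε + ε³ ((ε - 2)² + 1))`. The cubic part is nonnegative, and the linear
part is nonnegative for `ε ≤ 2/5` exactly when `3s² - 2s - 3 ≥ 0`, which holds once `s² ≥ 2`.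
-/

lemma cleared_ratio_bound {s ε : ℝ} (hs : 0 ≤ s) (hs2 : 2 ≤ s ^ 2) (hε0 : 0 ≤ ε)
    (hε1 : ε ≤ 2 / 5) :
    (1 - ε) ^ 5 * (1 + ε) + (s ^ 2 - 1 + s) * (1 - ε) ^ 2 ≤ (s - ε * (1 + s)) * (1 + s) := by
  have hlin : 0 ≤ s ^ 2 + 1 - (s ^ 2 + s + 4) * ε := by
    have : 0 ≤ 3 * s ^ 2 - 2 * s - 3 := by nlinarith
    nlinarith [mul_nonneg (sub_nonneg.2 hε1) (by positivity : (0 : ℝ) ≤ s ^ 2 + s + 4)]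
  have hcubic : 0 ≤ ε ^ 3 * ((ε - 2) ^ 2 + 1) := by positivity
  have slack : (s - ε * (1 + s)) * (1 + s) - ((1 - ε) ^ 5 * (1 + ε) + (s ^ 2 - 1 + s) * (1 - ε) ^ 2)
      = ε * (s ^ 2 + 1 - (s ^ 2 + s + 4) * ε + ε ^ 3 * ((ε - 2) ^ 2 + 1)) := by ring
  linarith [mul_nonneg hε0 (add_nonneg hlin hcubic)]

lemma ratio_bound {s ε : ℝ} (hs : 0 ≤ s) (hs2 : 2 ≤ s ^ 2) (hε0 : 0 ≤ ε) (hε1 : ε ≤ 2 / 5) :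
    (1 - ε) ^ 5 / (s + 1) ^ 2 ≤
      (s / (1 + s) - ε) / (1 + ε + (s ^ 2 - 1 + s) * ((1 - ε) ^ 3)⁻¹) := by
  have hε : 0 < 1 - ε := by linarith
  have hD : 0 < 1 + ε + (s ^ 2 - 1 + s) * ((1 - ε) ^ 3)⁻¹ := by
    have : 0 ≤ s ^ 2 - 1 + s := by nlinarith
    positivity
  rw [div_le_div_iff₀ (by positivity) hD]
  have hL : (1 - ε) ^ 5 * (1 + ε + (s ^ 2 - 1 + s) * ((1 - ε) ^ 3)⁻¹)
      = (1 - ε) ^ 5 * (1 + ε) + (s ^ 2 - 1 + s) * (1 - ε) ^ 2 := by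
    field_simp
  have hR : (s / (1 + s) - ε) * (s + 1) ^ 2 = (s - ε * (1 + s)) * (1 + s) := by
    field_simp
    ring
  rw [hL, hR]
  exact cleared_ratio_bound hs hs2 hε0 hε1

/-- Closing numerical inequality in the ParSSP ratio proof: for real
`k ≥ 1`, `ε ∈ [0, 2/5)` and `p = 1/(1+√(k+1))`,
`(1−p−ε)/(1+ε+(k+(1−p)/p)(1−ε)⁻³) ≥ (1−ε)⁵/(√(k+1)+1)²`. -/
theorem stmt_9 (k ε p : ℝ) (hk : 1 ≤ k) (hε0 : 0 ≤ ε) (hε1 : ε < 2 / 5)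
    (hp : p = 1 / (1 + Real.sqrt (k + 1))) :
    (1 - ε) ^ 5 / (Real.sqrt (k + 1) + 1) ^ 2 ≤
      (1 - p - ε) / (1 + ε + (k + (1 - p) / p) * ((1 - ε) ^ 3)⁻¹) := by
  set s := Real.sqrt (k + 1)
  have hs : 0 ≤ s := Real.sqrt_nonneg _
  have hs2 : s ^ 2 = k + 1 := Real.sq_sqrt (by linarith)
  have hpos : 0 < 1 + s := by linarith
  have h1p : 1 - p = s / (1 + s) := by
    rw [hp]; field_simp; ring
  have hodds : (1 - p) / p = s := by
    rw [h1p, hp]; field_simp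
  rw [hodds, h1p, show k = s ^ 2 - 1 by linarith]
  exact ratio_bound hs (by linarith) hε0 hε1.le
end
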